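/- Let d ≥ 1 and let f : ℝ_{>0}^d → ℝ be componentwise subadditive and Lebesgue measurable. For positive reals t_1,…,t_d and a real k, let V_{t_1,…,t_d,k} = {(x_1,…,x_d) : 0 < x_i < t_i for all i, and f(x_1,…,x_d) ≥ k}. Then for every t_1,…,t_d > 0, the d-dimensional Lebesgue measure of V_{t_1,…,t_d, f(t_1,…,t_d)/2^d} is at least (t_1⋯t_d)/2^d. -/

import Mathlib

/-!
Fix `x` in the box `∏ (0, tᵢ)`. Splitting `tᵢ = xᵢ + (tᵢ - xᵢ)` one coordinate at a time and
using subadditivity in that coordinate gives `f t ≤ ∑_S f (r_S x)`, where `r_S` replaces `xᵢ` by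
`tᵢ - xᵢ` for `i ∈ S`. One of the `2^d` terms is then at least `f t / 2^d`, so the box is covered
by the preimages of the level set under the `2^d` reflections `r_S`. Each `r_S` preserves Lebesgue
measure, hence `μ(box) ≤ 2^d μ(V)`.
-/

open MeasureTheory

variable {ι : Type*}

def ComponentwiseSubadditive [DecidableEq ι] (f : (ι → ℝ) → ℝ) : Prop :=
  ∀ (i : ι) (x : ι → ℝ) (y : ℝ), (∀ j, 0 < x j) → 0 < y →
    f (Function.update x i (x i + y)) ≤ f x + f (Function.update x i y)

def openBox (t : ι → ℝ) : Set (ι → ℝ) :=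
  Set.univ.pi fun i => Set.Ioo 0 (t i)

theorem sub_mem_openBox {t x : ι → ℝ} (hx : x ∈ openBox t) : t - x ∈ openBox t :=
  fun i _ => by
    obtain ⟨h0, ht⟩ := hx i trivial
    exact ⟨sub_pos.2 ht, sub_lt_self _ h0⟩

theorem volume_openBox [Fintype ι] {t : ι → ℝ} (ht : ∀ i, 0 < t i) :
    volume (openBox t) = ENNReal.ofReal (∏ i, t i) := by
  simp [openBox, volume_pi_pi, Real.volume_Ioo,
    ENNReal.ofReal_prod_of_nonneg fun i _ => (ht i).le]

section boxReflection

variable [DecidableEq ι]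

noncomputable def boxReflection (t : ι → ℝ) (S : Finset ι) : (ι → ℝ) ≃ᵐ (ι → ℝ) :=
  MeasurableEquiv.piCongrRight fun i =>
    if i ∈ S then MeasurableEquiv.subLeft (t i) else MeasurableEquiv.refl ℝ

theorem boxReflection_apply (t : ι → ℝ) (S : Finset ι) (x : ι → ℝ) :
    boxReflection t S x = S.piecewise (t - x) x := by
  funext i
  change (if i ∈ S then MeasurableEquiv.subLeft (t i) else MeasurableEquiv.refl ℝ) (x i) = _
  by_cases hi : i ∈ S
  · rw [if_pos hi, Finset.piecewise_eq_of_mem _ _ _ hi]; rfl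
  · rw [if_neg hi, Finset.piecewise_eq_of_notMem _ _ _ hi]; rfl

theorem measurePreserving_boxReflection [Fintype ι] (t : ι → ℝ) (S : Finset ι) :
    MeasurePreserving (boxReflection t S) := by
  refine measurePreserving_pi (fun _ => volume) (fun _ => volume) fun i => ?_
  by_cases hi : i ∈ S
  · simp only [hi, ↓reduceIte]; exact Measure.measurePreserving_sub_left volume (t i)
  · simp only [hi, ↓reduceIte]; exact MeasurePreserving.id volume

theorem boxReflection_mem_openBox {t x : ι → ℝ} (S : Finset ι) (hx : x ∈ openBox t) :
    boxReflection t S x ∈ openBox t := by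
  rw [boxReflection_apply]
  exact Finset.piecewise_mem_set_pi _ (sub_mem_openBox hx) hx

end boxReflection

namespace ComponentwiseSubadditive

variable [DecidableEq ι] {f : (ι → ℝ) → ℝ}

theorem le_sum_boxReflection_piecewise (hf : ComponentwiseSubadditive f) {t : ι → ℝ}
    (F : Finset ι) {x : ι → ℝ} (hx : x ∈ openBox t) :
    f (F.piecewise t x) ≤ ∑ S ∈ F.powerset, f (boxReflection t S x) := by
  induction F using Finset.induction generalizing x with
  | empty => simp [boxReflection_apply]
  | insert a F haF ih =>
    set x' := Function.update x a (t a - x a)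
    have hx' : x' ∈ openBox t :=
      (Set.update_mem_pi_iff_of_mem hx).2 fun _ => sub_mem_openBox hx a trivial
    have hpos : ∀ j, 0 < F.piecewise t x j := fun j => by
      obtain ⟨h0, ht⟩ := hx j trivial
      by_cases hj : j ∈ F <;> simp [hj, h0, h0.trans ht]
    have hsplit :
        f ((insert a F).piecewise t x) ≤ f (F.piecewise t x) + f (F.piecewise t x') := by
      have := hf a (F.piecewise t x) (t a - x a) hpos (sub_pos.2 (hx a trivial).2)
      rwa [Finset.piecewise_eq_of_notMem _ _ _ haF, add_sub_cancel, ← Finset.piecewise_insert,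
        Finset.update_piecewise_of_notMem _ _ _ haF] at this
    have hreflect : ∀ S ∈ F.powerset,
        boxReflection t S x' = boxReflection t (insert a S) x := fun S hS => by
      have haS : a ∉ S := fun h => haF (Finset.mem_powerset.1 hS h)
      funext j
      rcases eq_or_ne j a with rfl | hj
      · simp [boxReflection_apply, haS, x']
      · simp [boxReflection_apply, hj, x', Finset.piecewise]
    rw [Finset.sum_powerset_insert haF,
      ← Finset.sum_congr rfl fun S hS => congrArg f (hreflect S hS)]
    exact hsplit.trans (add_le_add (ih hx) (ih hx'))

variable [Fintype ι]

theorem openBox_subset_iUnion_preimage_boxReflection (hf : ComponentwiseSubadditive f)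
    (t : ι → ℝ) :
    openBox t ⊆ ⋃ S : Finset ι,
      boxReflection t S ⁻¹' {x | x ∈ openBox t ∧ f t / 2 ^ Fintype.card ι ≤ f x} := by
  intro x hx
  have hsum : ∑ _S : Finset ι, f t / 2 ^ Fintype.card ι ≤
      ∑ S : Finset ι, f (boxReflection t S x) := by
    have := hf.le_sum_boxReflection_piecewise Finset.univ hx
    rw [Finset.piecewise_univ, Finset.powerset_univ] at this
    simpa [Finset.card_univ, Fintype.card_finset, mul_div_cancel₀] using this
  obtain ⟨S, -, hS⟩ := Finset.exists_le_of_sum_le Finset.univ_nonempty hsum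
  exact Set.mem_iUnion.2 ⟨S, boxReflection_mem_openBox S hx, hS⟩

theorem volume_openBox_le_two_pow_mul_volume (hf : ComponentwiseSubadditive f) (t : ι → ℝ) :
    volume (openBox t) ≤
      2 ^ Fintype.card ι * volume {x | x ∈ openBox t ∧ f t / 2 ^ Fintype.card ι ≤ f x} :=
  calc volume (openBox t)
      ≤ ∑ S : Finset ι, volume (boxReflection t S ⁻¹'
          {x | x ∈ openBox t ∧ f t / 2 ^ Fintype.card ι ≤ f x}) :=
        (measure_mono (hf.openBox_subset_iUnion_preimage_boxReflection t)).trans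
          (measure_iUnion_fintype_le _ _)
    _ = _ := by
        simp only [(measurePreserving_boxReflection t _).measure_preimage_equiv,
          Finset.sum_const, Finset.card_univ, Fintype.card_finset, nsmul_eq_mul, Nat.cast_pow,
          Nat.cast_ofNat]

end ComponentwiseSubadditive

theorem measure_level_set_componentwise_subadditive_general
    (d : ℕ) (f : (Fin d → ℝ) → ℝ)
    (hf : ∀ (i : Fin d) (x : Fin d → ℝ) (y : ℝ), (∀ j, 0 < x j) → 0 < y →
      f (Function.update x i (x i + y)) ≤ f x + f (Function.update x i y))
    (t : Fin d → ℝ) (ht : ∀ i, 0 < t i) :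
    ENNReal.ofReal ((∏ i, t i) / 2 ^ d) ≤
      volume {x : Fin d → ℝ | (∀ i, 0 < x i ∧ x i < t i) ∧ f t / 2 ^ d ≤ f x} := by
  have hbound := ComponentwiseSubadditive.volume_openBox_le_two_pow_mul_volume hf t
  rw [volume_openBox ht, Fintype.card_fin] at hbound
  rw [ENNReal.ofReal_div_of_pos (by positivity), ENNReal.div_le_iff (by positivity) (by simp),
    mul_comm]
  simpa [openBox, Set.mem_univ_pi] using hbound

/-- For a componentwise subadditive, Lebesgue-measurable function `f` on the positive
orthant of `ℝ^d` and any `t₁,…,t_d > 0`, the level set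
`V = {x | 0 < xᵢ < tᵢ for all i, f x ≥ f(t₁,…,t_d)/2^d}` has `d`-dimensional Lebesgue
measure at least `(t₁⋯t_d)/2^d`. -/
theorem measure_level_set_componentwise_subadditive
    (d : ℕ) (hd : 1 ≤ d) (f : (Fin d → ℝ) → ℝ)
    (hf : ∀ (i : Fin d) (x : Fin d → ℝ) (y : ℝ), (∀ j, 0 < x j) → 0 < y →
      f (Function.update x i (x i + y)) ≤ f x + f (Function.update x i y))
    (hmeas : AEMeasurable f (volume.restrict {x : Fin d → ℝ | ∀ i, 0 < x i}))
    (t : Fin d → ℝ) (ht : ∀ i, 0 < t i) :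
    ENNReal.ofReal ((∏ i, t i) / 2 ^ d) ≤
      volume {x : Fin d → ℝ | (∀ i, 0 < x i ∧ x i < t i) ∧ f t / 2 ^ d ≤ f x} :=
  measure_level_set_componentwise_subadditive_general d f hf t ht
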